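/- arXiv:0801.0270 — 2 statements merged into one kernel-verified Lean document; each statement's English description precedes it below -/
import Mathlib

section
/- Let K(A,B) be a complete bipartite graph whose edges are colored with two colors, blue and green. Then exactly one of the following holds: (1) K(A,B) has a monochromatic spanning tree; (2) K(A,B) is an M-type graph; (3) K(A,B) is an S2-type graph; (4) K(A,B) is an S1-type graph. -/
/-!
Common definitions for edge-colored complete bipartite graphs.

The complete bipartite graph `K(A,B)` with partite sets `α` and `β` is modeled on the
vertex type `α ⊕ β`; an edge-coloring with color type `γ` is a function `c : α → β → γ`
(giving the color of the edge between `a : α` and `b : β`).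
-/

/-- The spanning subgraph of the complete bipartite graph on parts `α`, `β` consisting of
the edges of color `k`, under the edge-coloring `c`. -/
def biColorGraph {α β γ : Type*} (c : α → β → γ) (k : γ) : SimpleGraph (α ⊕ β) where
  Adj x y := (∃ a b, x = Sum.inl a ∧ y = Sum.inr b ∧ c a b = k) ∨
             (∃ a b, x = Sum.inr b ∧ y = Sum.inl a ∧ c a b = k)
  symm := by
    constructor
    rintro x y (⟨a, b, hx, hy, hc⟩ | ⟨a, b, hx, hy, hc⟩)
    · exact Or.inr ⟨a, b, hy, hx, hc⟩
    · exact Or.inl ⟨a, b, hy, hx, hc⟩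
  loopless := by
    constructor
    rintro x (⟨a, b, hx, hy, _⟩ | ⟨a, b, hx, hy, _⟩) <;> subst hx <;> simp at hy

/-- `S` is the vertex set of a monochromatic tree: it induces a connected subgraph in some
color class.  (A single vertex also counts as a monochromatic tree.) -/
def IsMonoTreeSet {α β γ : Type*} (c : α → β → γ) (S : Set (α ⊕ β)) : Prop :=
  ∃ k, ((biColorGraph c k).induce S).Connected

/-- `P` is a partition of the vertex set of the complete bipartite graph into
(nonempty, pairwise vertex-disjoint) vertex sets of monochromatic trees. -/
def IsMonoTreePartition {α β γ : Type*} (c : α → β → γ) (P : Finset (Set (α ⊕ β))) : Prop :=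
  (∀ S ∈ P, IsMonoTreeSet c S) ∧ ∀ x : α ⊕ β, ∃! S, S ∈ P ∧ x ∈ S

/-- The vertex set can be partitioned into at most `m` vertex-disjoint monochromatic trees. -/
def HasMonoTreePartition {α β γ : Type*} (c : α → β → γ) (m : ℕ) : Prop :=
  ∃ P : Finset (Set (α ⊕ β)), IsMonoTreePartition c P ∧ P.card ≤ m

/-- Every vertex has color degree 3, i.e. all three colors appear on its incident edges. -/
def ColorDegreeThree {α β : Type*} (c : α → β → Fin 3) : Prop :=
  (∀ (a : α) (k : Fin 3), ∃ b, c a b = k) ∧ ∀ (b : β) (k : Fin 3), ∃ a, c a b = k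

/-! For 2-edge-colorings we use `Bool` as the color type: `true` = blue, `false` = green. -/

/-- The vertices of `α` all of whose incident edges are blue. -/
def XA {α β : Type*} (c : α → β → Bool) : Set α := {a | ∀ b, c a b = true}

/-- The vertices of `α` all of whose incident edges are green. -/
def YA {α β : Type*} (c : α → β → Bool) : Set α := {a | ∀ b, c a b = false}

/-- The vertices of `β` all of whose incident edges are blue. -/
def XB {α β : Type*} (c : α → β → Bool) : Set β := {b | ∀ a, c a b = true}

/-- The vertices of `β` all of whose incident edges are green. -/
def YB {α β : Type*} (c : α → β → Bool) : Set β := {b | ∀ a, c a b = false}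

/-- `S`-type graph: `X(G) ≠ ∅` and `Y(G) ≠ ∅`. -/
def IsSType {α β : Type*} (c : α → β → Bool) : Prop :=
  ((XA c).Nonempty ∨ (XB c).Nonempty) ∧ ((YA c).Nonempty ∨ (YB c).Nonempty)

/-- `M`-type graph: there are partitions `A = A1 ∪ A1ᶜ`, `B = B1 ∪ B1ᶜ` with all four parts
nonempty such that `K(A1,B1)` and `K(A1ᶜ,B1ᶜ)` are blue and `K(A1,B1ᶜ)`, `K(A1ᶜ,B1)`
are green. -/
def IsMType {α β : Type*} (c : α → β → Bool) : Prop :=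
  ∃ (A1 : Set α) (B1 : Set β),
    A1.Nonempty ∧ A1ᶜ.Nonempty ∧ B1.Nonempty ∧ B1ᶜ.Nonempty ∧
    (∀ a ∈ A1, ∀ b ∈ B1, c a b = true) ∧
    (∀ a ∈ A1ᶜ, ∀ b ∈ B1ᶜ, c a b = true) ∧
    (∀ a ∈ A1, ∀ b ∈ B1ᶜ, c a b = false) ∧
    (∀ a ∈ A1ᶜ, ∀ b ∈ B1, c a b = false)

/-- For a subset `Bi ⊆ B`, the set `b(Bi) ⊆ A` of vertices sending blue edges to all of `Bi`
and green edges to all of `Biᶜ`.  (Thus `b(B̄i) = bsetA c Biᶜ`.) -/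
def bsetA {α β : Type*} (c : α → β → Bool) (Bi : Set β) : Set α :=
  {a | (∀ b ∈ Bi, c a b = true) ∧ ∀ b ∈ Biᶜ, c a b = false}

/-- For a subset `Ai ⊆ A`, the set `b(Ai) ⊆ B` of vertices sending blue edges to all of `Ai`
and green edges to all of `Aiᶜ`. -/
def bsetB {α β : Type*} (c : α → β → Bool) (Ai : Set α) : Set β :=
  {b | (∀ a ∈ Ai, c a b = true) ∧ ∀ a ∈ Aiᶜ, c a b = false}

/-- `S1*`-type graph with `X(G) ∪ Y(G) ⊆ A`: `|B| = 1`, `|A1| ≥ 2` and `|A3| ≥ 2`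
(where `A1 = X(G)`, `A3 = Y(G)`). -/
def IsS1StarA {α β : Type*} [Fintype β] (c : α → β → Bool) : Prop :=
  Fintype.card β = 1 ∧ 2 ≤ (XA c).ncard ∧ 2 ≤ (YA c).ncard

/-- `S1'`-type graph with `X(G) ∪ Y(G) ⊆ A`: `|A1| ≥ 2`, `|A3| ≥ 2`, `|B| ≥ 2`, and for
every partition `B = Bi ∪ B̄i` into nonempty parts, `b(Bi) ≠ ∅` and `b(B̄i) ≠ ∅`. -/
def IsS1PrimeA {α β : Type*} [Fintype β] (c : α → β → Bool) : Prop :=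
  2 ≤ (XA c).ncard ∧ 2 ≤ (YA c).ncard ∧ 2 ≤ Fintype.card β ∧
  ∀ Bi : Set β, Bi.Nonempty → Biᶜ.Nonempty →
    (bsetA c Bi).Nonempty ∧ (bsetA c Biᶜ).Nonempty

/-- `S1*`-type graph with `X(G) ∪ Y(G) ⊆ B`. -/
def IsS1StarB {α β : Type*} [Fintype α] (c : α → β → Bool) : Prop :=
  Fintype.card α = 1 ∧ 2 ≤ (XB c).ncard ∧ 2 ≤ (YB c).ncard

/-- `S1'`-type graph with `X(G) ∪ Y(G) ⊆ B`. -/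
def IsS1PrimeB {α β : Type*} [Fintype α] (c : α → β → Bool) : Prop :=
  2 ≤ (XB c).ncard ∧ 2 ≤ (YB c).ncard ∧ 2 ≤ Fintype.card α ∧
  ∀ Ai : Set α, Ai.Nonempty → Aiᶜ.Nonempty →
    (bsetB c Ai).Nonempty ∧ (bsetB c Aiᶜ).Nonempty

/-- `S1`-type graph: `S1*`-type or `S1'`-type. -/
def IsS1 {α β : Type*} [Fintype α] [Fintype β] (c : α → β → Bool) : Prop :=
  IsS1StarA c ∨ IsS1PrimeA c ∨ IsS1StarB c ∨ IsS1PrimeB c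

/-- `S2`-type graph: an `S`-type graph that is not `S1`-type. -/
def IsS2 {α β : Type*} [Fintype α] [Fintype β] (c : α → β → Bool) : Prop :=
  IsSType c ∧ ¬ IsS1 c

/-!
A connected color class or an `M`-type coloring leaves no vertex monochromatic, while an `S`-type
coloring has a vertex of each color; this gives all the exclusions. For the existence part,
suppose neither color class is connected and no vertex has all its edges of color `!k`. A
component of the `k`-graph then cuts both sides into nonempty parts `p`, `¬ p` and `q`, `¬ q`,
and every edge from `p` to `¬ q` or from `¬ p` to `q` has color `!k`. These edges already
connect everything except across the two blocks, so, the `!k`-graph being disconnected, every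
edge inside `p × q` and `¬ p × ¬ q` has color `k`: the coloring is `M`-type.
-/

open SimpleGraph

theorem SimpleGraph.Reachable.iff_of_forall_adj {V : Type*} {G : SimpleGraph V} {P : V → Prop}
    (h : ∀ u v, G.Adj u v → (P u ↔ P v)) {x y : V} (hxy : G.Reachable x y) : P x ↔ P y := by
  obtain ⟨w⟩ := hxy
  induction w with
  | nil => rfl
  | cons huv _ ih => exact (h _ _ huv).trans ih

section
variable {α β : Type*} {c : α → β → Bool} {k : Bool}

@[simp] lemma biColorGraph_adj_inl_inr {a : α} {b : β} :
    (biColorGraph c k).Adj (.inl a) (.inr b) ↔ c a b = k := by simp [biColorGraph]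

@[simp] lemma biColorGraph_adj_inr_inl {a : α} {b : β} :
    (biColorGraph c k).Adj (.inr b) (.inl a) ↔ c a b = k := by simp [biColorGraph]

@[simp] lemma biColorGraph_not_adj_inl_inl {a a' : α} :
    ¬ (biColorGraph c k).Adj (.inl a) (.inl a') := by simp [biColorGraph]

@[simp] lemma biColorGraph_not_adj_inr_inr {b b' : β} :
    ¬ (biColorGraph c k).Adj (.inr b) (.inr b') := by simp [biColorGraph]

def ColorCovers (c : α → β → Bool) (k : Bool) : Prop :=
  (∀ a, ∃ b, c a b = k) ∧ ∀ b, ∃ a, c a b = k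

theorem isSType_iff_forall_not_colorCovers : IsSType c ↔ ∀ k, ¬ ColorCovers c k := by
  simp only [IsSType, ColorCovers, Bool.forall_bool, XA, YA, XB, YB, Set.Nonempty,
    Set.mem_ofPred_eq, not_and_or, not_forall, not_exists, Bool.not_eq_false, Bool.not_eq_true]

lemma colorCovers_of_connected [Nonempty α] [Nonempty β] (h : (biColorGraph c k).Connected) :
    ColorCovers c k := by
  have : Nontrivial (α ⊕ β) :=
    ⟨⟨.inl (Classical.arbitrary α), .inr (Classical.arbitrary β), Sum.inl_ne_inr⟩⟩
  constructor
  · intro a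
    obtain ⟨_ | b, hab⟩ := h.preconnected.exists_adj_of_nontrivial (.inl a)
    · simp at hab
    · exact ⟨b, by simpa using hab⟩
  · intro b
    obtain ⟨a | _, hab⟩ := h.preconnected.exists_adj_of_nontrivial (.inr b)
    · exact ⟨a, by simpa using hab⟩
    · simp at hab

lemma not_connected_of_forall_eq_imp_iff (p : α → Prop) (q : β → Prop)
    (h : ∀ a b, c a b = k → (p a ↔ q b)) {a₁ a₂ : α} (h₁ : p a₁) (h₂ : ¬ p a₂) :
    ¬ (biColorGraph c k).Connected := by
  intro hconn
  have hinv : ∀ u v, (biColorGraph c k).Adj u v → (Sum.elim p q u ↔ Sum.elim p q v) := by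
    rintro (a | b) (a' | b') huv <;> simp only [biColorGraph_adj_inl_inr,
      biColorGraph_adj_inr_inl, biColorGraph_not_adj_inl_inl, biColorGraph_not_adj_inr_inr] at huv
    · exact h a b' huv
    · exact (h a' b huv).symm
  exact h₂ ((hconn.preconnected (.inl a₁) (.inl a₂)).iff_of_forall_adj hinv |>.1 h₁)

lemma connected_of_forall_iff_not (p : α → Prop) (q : β → Prop)
    (hp : ∃ a, p a) (hp' : ∃ a, ¬ p a) (hq : ∃ b, q b) (hq' : ∃ b, ¬ q b)
    (h : ∀ a b, (p a ↔ ¬ q b) → c a b = k) {a₀ : α} {b₀ : β} (h₀ : p a₀ ↔ q b₀)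
    (hc₀ : c a₀ b₀ = k) : (biColorGraph c k).Connected := by
  have hα : ∀ b, ∃ a, p a ↔ ¬ q b := fun b ↦ by
    by_cases hb : q b
    · exact hp'.imp fun a ha ↦ by tauto
    · exact hp.imp fun a ha ↦ by tauto
  have hβ : ∀ a, ∃ b, p a ↔ ¬ q b := fun a ↦ by
    by_cases ha : p a
    · exact hq'.imp fun b hb ↦ by tauto
    · exact hq.imp fun b hb ↦ by tauto
  have hinr : ∀ b, (biColorGraph c k).Reachable (.inl a₀) (.inr b) := by
    intro b
    by_cases hb : p a₀ ↔ ¬ q b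
    · exact (biColorGraph_adj_inl_inr.2 (h _ _ hb)).reachable
    obtain ⟨a, ha⟩ := hα b₀
    have hab : p a ↔ ¬ q b := by tauto
    exact (biColorGraph_adj_inl_inr.2 hc₀).reachable.trans
      ((biColorGraph_adj_inr_inl.2 (h _ _ ha)).reachable.trans
        (biColorGraph_adj_inl_inr.2 (h _ _ hab)).reachable)
  have hall : ∀ v, (biColorGraph c k).Reachable (.inl a₀) v := by
    rintro (a | b)
    · obtain ⟨b, hab⟩ := hβ a
      exact (hinr b).trans (biColorGraph_adj_inr_inl.2 (h _ _ hab)).reachable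
    · exact hinr b
  exact (connected_iff _).2 ⟨fun u v ↦ (hall u).symm.trans (hall v), ⟨.inl a₀⟩⟩

theorem isMType_iff (k : Bool) :
    IsMType c ↔ ∃ (p : α → Prop) (q : β → Prop), (∃ a, p a) ∧ (∃ a, ¬ p a) ∧
      (∃ b, q b) ∧ (∃ b, ¬ q b) ∧ ∀ a b, c a b = k ↔ (p a ↔ q b) := by
  constructor
  · rintro ⟨A₁, B₁, hA₁, hA₁', ⟨b₁, hb₁⟩, ⟨b₂, hb₂⟩, e₁, e₂, e₃, e₄⟩
    refine ⟨(· ∈ A₁), fun b ↦ b ∈ B₁ ↔ k, hA₁, hA₁', ?_, ?_, fun a b ↦ ?_⟩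
    · cases k
      · exact ⟨b₂, by simpa using hb₂⟩
      · exact ⟨b₁, by simpa using hb₁⟩
    · cases k
      · exact ⟨b₁, by simpa using hb₁⟩
      · exact ⟨b₂, by simpa using hb₂⟩
    · by_cases ha : a ∈ A₁ <;> by_cases hb : b ∈ B₁ <;> cases k <;> simp_all
  · rintro ⟨p, q, hp, hp', ⟨b₁, hb₁⟩, ⟨b₂, hb₂⟩, h⟩
    refine ⟨{a | p a}, {b | q b ↔ k}, hp, hp', ?_, ?_, ?_, ?_, ?_, ?_⟩
    · cases k
      · exact ⟨b₂, by simpa using hb₂⟩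
      · exact ⟨b₁, by simpa using hb₁⟩
    · cases k
      · exact ⟨b₁, by simpa using hb₁⟩
      · exact ⟨b₂, by simpa using hb₂⟩
    all_goals intro a ha b hb; have := h a b; cases k <;> cases hc : c a b <;> simp_all

lemma IsMType.not_connected (h : IsMType c) (k : Bool) : ¬ (biColorGraph c k).Connected := by
  obtain ⟨p, q, ⟨a₁, h₁⟩, ⟨a₂, h₂⟩, -, -, hpq⟩ := (isMType_iff k).1 h
  exact not_connected_of_forall_eq_imp_iff p q (fun a b ↦ (hpq a b).1) h₁ h₂

lemma IsMType.colorCovers (h : IsMType c) (k : Bool) : ColorCovers c k := by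
  obtain ⟨p, q, ⟨a₁, ha₁⟩, ⟨a₂, ha₂⟩, ⟨b₁, hb₁⟩, ⟨b₂, hb₂⟩, hpq⟩ := (isMType_iff k).1 h
  constructor
  · intro a
    by_cases ha : p a
    · exact ⟨b₁, (hpq a b₁).2 (by tauto)⟩
    · exact ⟨b₂, (hpq a b₂).2 (by tauto)⟩
  · intro b
    by_cases hb : q b
    · exact ⟨a₁, (hpq a₁ b).2 (by tauto)⟩
    · exact ⟨a₂, (hpq a₂ b).2 (by tauto)⟩

theorem isMType_of_not_connected [Nonempty α] (hk : ¬ (biColorGraph c k).Connected)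
    (hk' : ¬ (biColorGraph c (!k)).Connected) (hcov : ColorCovers c k) : IsMType c := by
  obtain ⟨hα, hβ⟩ := hcov
  have : Nonempty (α ⊕ β) := ⟨.inl (Classical.arbitrary α)⟩
  have hpre : ¬ (biColorGraph c k).Preconnected := fun hpre ↦ hk ⟨hpre⟩
  obtain ⟨x, y, hxy⟩ : ∃ x y, ¬ (biColorGraph c k).Reachable x y := by
    simpa only [Preconnected, not_forall] using hpre
  set p : α → Prop := fun a ↦ (biColorGraph c k).Reachable x (.inl a)
  set q : β → Prop := fun b ↦ (biColorGraph c k).Reachable x (.inr b)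
  have hpq : ∀ a b, c a b = k → (p a ↔ q b) := fun a b hab ↦
    ⟨fun ha ↦ ha.trans (biColorGraph_adj_inl_inr.2 hab).reachable,
      fun hb ↦ hb.trans (biColorGraph_adj_inr_inl.2 hab).reachable⟩
  have hp : ∃ a, p a := by
    rcases x with a | b
    · exact ⟨a, .rfl⟩
    · obtain ⟨a, hab⟩ := hβ b
      exact ⟨a, (biColorGraph_adj_inr_inl.2 hab).reachable⟩
  have hq : ∃ b, q b := by
    rcases x with a | b
    · obtain ⟨b, hab⟩ := hα a
      exact ⟨b, (biColorGraph_adj_inl_inr.2 hab).reachable⟩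
    · exact ⟨b, .rfl⟩
  have hp' : ∃ a, ¬ p a := by
    rcases y with a | b
    · exact ⟨a, hxy⟩
    · obtain ⟨a, hab⟩ := hβ b
      exact ⟨a, fun ha ↦ hxy ((hpq a b hab).1 ha)⟩
  have hq' : ∃ b, ¬ q b := by
    rcases y with a | b
    · obtain ⟨b, hab⟩ := hα a
      exact ⟨b, fun hb ↦ hxy ((hpq a b hab).2 hb)⟩
    · exact ⟨b, hxy⟩
  refine (isMType_iff k).2 ⟨p, q, hp, hp', hq, hq', fun a b ↦ ⟨hpq a b, fun hab ↦ ?_⟩⟩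
  by_contra hne
  refine hk' (connected_of_forall_iff_not p q hp hp' hq hq' (fun a' b' h' ↦ ?_) hab
    (Bool.eq_not.2 hne))
  by_contra hne'
  have := hpq a' b' (by simpa using Bool.eq_not.not.1 hne')
  tauto

theorem isMType_or_isSType_of_forall_not_connected [Nonempty α]
    (h : ∀ k, ¬ (biColorGraph c k).Connected) : IsMType c ∨ IsSType c :=
  or_iff_not_imp_left.2 fun hM ↦ isSType_iff_forall_not_colorCovers.2 fun k hk ↦
    hM (isMType_of_not_connected (h k) (h !k) hk)

lemma IsS1.isSType [Fintype α] [Fintype β] (h : IsS1 c) : IsSType c := by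
  rcases h with ⟨-, hX, hY⟩ | ⟨hX, hY, -⟩ | ⟨-, hX, hY⟩ | ⟨hX, hY, -⟩
  · exact ⟨.inl (Set.nonempty_of_ncard_ne_zero (by omega)),
      .inl (Set.nonempty_of_ncard_ne_zero (by omega))⟩
  · exact ⟨.inl (Set.nonempty_of_ncard_ne_zero (by omega)),
      .inl (Set.nonempty_of_ncard_ne_zero (by omega))⟩
  · exact ⟨.inr (Set.nonempty_of_ncard_ne_zero (by omega)),
      .inr (Set.nonempty_of_ncard_ne_zero (by omega))⟩
  · exact ⟨.inr (Set.nonempty_of_ncard_ne_zero (by omega)),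
      .inr (Set.nonempty_of_ncard_ne_zero (by omega))⟩

end

/-- **Corollary 5.** For every 2-edge-colored complete bipartite graph,
exactly one of the following holds: (1) it has a monochromatic spanning tree;
(2) it is `M`-type; (3) it is `S2`-type; (4) it is `S1`-type. -/
theorem two_colored_trichotomy {α β : Type*} [Fintype α] [Fintype β]
    [Nonempty α] [Nonempty β] (c : α → β → Bool) :
    ((∃ k, (biColorGraph c k).Connected) ∨ IsMType c ∨ IsS2 c ∨ IsS1 c) ∧
    ¬ ((∃ k, (biColorGraph c k).Connected) ∧ IsMType c) ∧
    ¬ ((∃ k, (biColorGraph c k).Connected) ∧ IsS2 c) ∧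
    ¬ ((∃ k, (biColorGraph c k).Connected) ∧ IsS1 c) ∧
    ¬ (IsMType c ∧ IsS2 c) ∧
    ¬ (IsMType c ∧ IsS1 c) ∧
    ¬ (IsS2 c ∧ IsS1 c) := by
  have hconn_S : (∃ k, (biColorGraph c k).Connected) → ¬ IsSType c := fun ⟨k, hk⟩ hS ↦
    isSType_iff_forall_not_colorCovers.1 hS k (colorCovers_of_connected hk)
  have hM_S : IsMType c → ¬ IsSType c := fun hM hS ↦
    isSType_iff_forall_not_colorCovers.1 hS true (hM.colorCovers true)
  refine ⟨?_, fun ⟨⟨k, hk⟩, hM⟩ ↦ hM.not_connected k hk, fun ⟨hC, hS, _⟩ ↦ hconn_S hC hS,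
    fun ⟨hC, h1⟩ ↦ hconn_S hC h1.isSType, fun ⟨hM, hS, _⟩ ↦ hM_S hM hS,
    fun ⟨hM, h1⟩ ↦ hM_S hM h1.isSType, fun ⟨⟨_, hn⟩, h1⟩ ↦ hn h1⟩
  by_cases hC : ∃ k, (biColorGraph c k).Connected
  · exact .inl hC
  rcases isMType_or_isSType_of_forall_not_connected (not_exists.1 hC) with hM | hS
  · exact .inr (.inl hM)
  by_cases h1 : IsS1 c
  · exact .inr (.inr (.inr h1))
  · exact .inr (.inr (.inl ⟨hS, h1⟩))
end

section
/- Let K(A,B) be a complete bipartite graph whose edges are colored with two colors, blue and green, such that every vertex is incident with at least one blue edge and at least one green edge, the spanning subgraph formed by the green edges is disconnected, and K(A,B) is not an M-type graph. Then K(A,B) has a blue spanning tree. -/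
/-!
The green component `C` of a vertex splits `A` and `B` into `A ∩ C`, `A \ C` and `B ∩ C`,
`B \ C`; every green edge stays inside `C` or outside it, so `K(A ∩ C, B \ C)` and
`K(A \ C, B ∩ C)` are blue. Since every vertex has a green edge, all four parts are nonempty,
so these two blue complete bipartite graphs are connected and together span the graph. If
the graph is not `M`-type, one more blue edge joins them.

The split is recorded by Boolean labels `p a = [a ∈ C]`, `q b = [b ∉ C]`: edges between equal
labels are blue, and `M`-type means precisely that the blue edges are those between equal
labels, for some labels taking both values on each side.
-/

open Function

namespace biColorGraph

variable {α β γ : Type*} {c : α → β → γ} {k : γ}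

@[simp]
theorem adj_inl_inr {a : α} {b : β} :
    (biColorGraph c k).Adj (.inl a) (.inr b) ↔ c a b = k := by
  simp [biColorGraph]

theorem reachable_inl_iff_reachable_inr {a : α} {b : β} (h : c a b = k) (u : α ⊕ β) :
    (biColorGraph c k).Reachable u (.inl a) ↔ (biColorGraph c k).Reachable u (.inr b) :=
  have hab : (biColorGraph c k).Adj (.inl a) (.inr b) := adj_inl_inr.mpr h
  ⟨fun hu => hu.trans hab.reachable, fun hu => hu.trans hab.symm.reachable⟩

theorem exists_reachable_inl_inr (hα : ∀ a, ∃ b, c a b = k) (hβ : ∀ b, ∃ a, c a b = k)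
    (w : α ⊕ β) :
    ∃ a b, (biColorGraph c k).Reachable w (.inl a) ∧ (biColorGraph c k).Reachable w (.inr b) := by
  rcases w with a | b
  · obtain ⟨b, hb⟩ := hα a
    exact ⟨a, b, .rfl, (adj_inl_inr.mpr hb).reachable⟩
  · obtain ⟨a, ha⟩ := hβ b
    exact ⟨a, b, (adj_inl_inr.mpr ha).symm.reachable, .rfl⟩

section Labels

variable {ι : Type*} {p : α → ι} {q : β → ι}

theorem reachable_inr_surjInv (hp : Surjective p) (hq : Surjective q)
    (h : ∀ a b, p a = q b → c a b = k) (x : α ⊕ β) :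
    (biColorGraph c k).Reachable x (.inr (surjInv hq (Sum.elim p q x))) := by
  rcases x with a | b
  · exact (adj_inl_inr.mpr (h _ _ (surjInv_eq hq _).symm)).reachable
  · have hb := adj_inl_inr.mpr (h _ b (surjInv_eq hp (q b)))
    have hb' := adj_inl_inr.mpr (h _ _ ((surjInv_eq hp (q b)).trans (surjInv_eq hq _).symm))
    exact hb.symm.reachable.trans hb'.reachable

theorem reachable_of_label_eq (hp : Surjective p) (hq : Surjective q)
    (h : ∀ a b, p a = q b → c a b = k) {x y : α ⊕ β} (hxy : Sum.elim p q x = Sum.elim p q y) :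
    (biColorGraph c k).Reachable x y := by
  have hy := reachable_inr_surjInv hp hq h y
  rw [← hxy] at hy
  exact (reachable_inr_surjInv hp hq h x).trans hy.symm

theorem connected_of_bool_labels {p : α → Bool} {q : β → Bool} (hp : Surjective p)
    (hq : Surjective q) (h : ∀ a b, p a = q b → c a b = k) {a₀ : α} {b₀ : β}
    (hne : p a₀ ≠ q b₀) (hc₀ : c a₀ b₀ = k) : (biColorGraph c k).Connected := by
  have hbridge : (biColorGraph c k).Reachable (.inr b₀) (.inl a₀) :=
    (adj_inl_inr.mpr hc₀).symm.reachable
  -- a Bool label differs from `p a₀` only if it equals `q b₀`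
  have hroot (x : α ⊕ β) : (biColorGraph c k).Reachable (.inl a₀) x := by
    by_cases hx : Sum.elim p q x = p a₀
    · exact (reachable_of_label_eq hp hq h hx).symm
    · have hx' : Sum.elim p q (.inr b₀) = Sum.elim p q x :=
        (Bool.eq_not_of_ne hne.symm).trans (Bool.eq_not_of_ne hx).symm
      exact hbridge.symm.trans (reachable_of_label_eq hp hq h hx')
  exact (SimpleGraph.connected_iff_exists_forall_reachable _).mpr ⟨.inl a₀, hroot⟩

end Labels

end biColorGraph

theorem isMType_of_surjective {α β : Type*} {c : α → β → Bool} {p : α → Bool} {q : β → Bool}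
    (hp : Surjective p) (hq : Surjective q) (h : ∀ a b, c a b = true ↔ p a = q b) :
    IsMType c := by
  obtain ⟨⟨a₁, ha₁⟩, ⟨a₂, ha₂⟩⟩ := And.intro (hp true) (hp false)
  obtain ⟨⟨b₁, hb₁⟩, ⟨b₂, hb₂⟩⟩ := And.intro (hq true) (hq false)
  have hgreen {a b} (hab : p a ≠ q b) : c a b = false :=
    Bool.eq_false_iff.mpr fun hc => hab ((h a b).mp hc)
  refine ⟨{a | p a = true}, {b | q b = true}, ⟨a₁, ha₁⟩, ⟨a₂, by simp [ha₂]⟩, ⟨b₁, hb₁⟩,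
    ⟨b₂, by simp [hb₂]⟩, ?_, ?_, ?_, ?_⟩ <;> intro a ha b hb <;> simp only [Set.mem_ofPred_eq,
      Set.mem_compl_iff, Bool.not_eq_true] at ha hb
  · exact (h a b).mpr (ha.trans hb.symm)
  · exact (h a b).mpr (ha.trans hb.symm)
  · exact hgreen (by simp [ha, hb])
  · exact hgreen (by simp [ha, hb])

theorem green_disconnected_not_M_blue_spanning_tree_general {α β : Type*}
    [Nonempty α] (c : α → β → Bool)
    (hgreen : (∀ a, ∃ b, c a b = false) ∧ ∀ b, ∃ a, c a b = false)
    (hdis : ¬ (biColorGraph c false).Connected)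
    (hM : ¬ IsMType c) :
    (biColorGraph c true).Connected := by
  classical
  set G := biColorGraph c false
  obtain ⟨u, v, huv⟩ : ∃ u v, ¬ G.Reachable u v := by
    by_contra! h
    exact hdis ⟨h⟩
  set p : α → Bool := fun a => decide (G.Reachable u (.inl a))
  set q : β → Bool := fun b => decide (¬ G.Reachable u (.inr b))
  have hblue (a : α) (b : β) (hab : p a = q b) : c a b = true := by
    by_contra hc
    have : G.Reachable u (.inl a) ↔ G.Reachable u (.inr b) :=
      biColorGraph.reachable_inl_iff_reachable_inr (Bool.eq_false_iff.mpr hc) u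
    simp [p, q, this] at hab
  obtain ⟨hgα, hgβ⟩ := hgreen
  obtain ⟨au, bu, hau, hbu⟩ := biColorGraph.exists_reachable_inl_inr hgα hgβ u
  obtain ⟨av, bv, hav, hbv⟩ := biColorGraph.exists_reachable_inl_inr hgα hgβ v
  have hp : Surjective p := Bool.forall_bool.mpr
    ⟨⟨av, by simpa [p] using fun h => huv (h.trans hav.symm)⟩, ⟨au, by simpa [p] using hau⟩⟩
  have hq : Surjective q := Bool.forall_bool.mpr
    ⟨⟨bu, by simpa [q] using hbu⟩, ⟨bv, by simpa [q] using fun h => huv (h.trans hbv.symm)⟩⟩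
  obtain ⟨a₀, b₀, hne, hc₀⟩ : ∃ a b, p a ≠ q b ∧ c a b = true := by
    by_contra! h
    exact hM (isMType_of_surjective hp hq fun a b => ⟨fun hc => by_contra (h a b · hc), hblue a b⟩)
  exact biColorGraph.connected_of_bool_labels hp hq hblue hne hc₀

/-- If in a 2-edge-colored complete bipartite graph every vertex is
incident with at least one blue and at least one green edge, the spanning subgraph of
green edges is disconnected, and the graph is not an `M`-type graph, then it has a blue
spanning tree. -/
theorem green_disconnected_not_M_blue_spanning_tree {α β : Type*} [Fintype α] [Fintype β]
    [Nonempty α] [Nonempty β] (c : α → β → Bool)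
    (hblue : (∀ a, ∃ b, c a b = true) ∧ ∀ b, ∃ a, c a b = true)
    (hgreen : (∀ a, ∃ b, c a b = false) ∧ ∀ b, ∃ a, c a b = false)
    (hdis : ¬ (biColorGraph c false).Connected)
    (hM : ¬ IsMType c) :
    (biColorGraph c true).Connected :=
  green_disconnected_not_M_blue_spanning_tree_general c hgreen hdis hM
end
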